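/- arXiv:2307.09842 — 3 statements merged into one kernel-verified Lean document; each statement's English description precedes it below -/
import Mathlib

section
/- Let K > 0, n ≥ 2 and let h : B_α(0') → ℝ be C² with h(0') = 0, ∇'h(0') = 0' and |h(x')| ≤ nK|x'|², |∇'h(x')| ≤ nK|x'| for |x'| < α. Suppose 0 < ρ < min{1/(8nK), ρ₀} where B_{2ρ₀}(0) lies inside the coordinate neighborhood, and let x₀ = (0', ρ). Then for any z' ∈ B_α(0') with z' ≠ 0' and |(z', h(z'))| ≤ 2ρ, one has |(z', h(z') − ρ)| > ρ; i.e., every graph point of h other than the origin, lying within distance 2ρ of the origin, is at distance strictly greater than ρ from x₀. -/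
open Metric Set

noncomputable section

theorem stmt_5 (n : ℕ) (hn : 2 ≤ n) (K α ρ₀ ρ : ℝ) (hK : 0 < K) (hα : 0 < α)
    (hρ₀ : 0 < ρ₀) (hcoord : 2 * ρ₀ ≤ α)
    (hρ : 0 < ρ) (hρlt : ρ < min (1 / (8 * n * K)) ρ₀)
    (h : EuclideanSpace ℝ (Fin (n - 1)) → ℝ) (h0 : h 0 = 0)
    (hb1 : ∀ z' ∈ ball (0 : EuclideanSpace ℝ (Fin (n - 1))) α, |h z'| ≤ n * K * ‖z'‖ ^ 2)
    (hb2 : ∀ z' ∈ ball (0 : EuclideanSpace ℝ (Fin (n - 1))) α,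
      ‖fderiv ℝ h z'‖ ≤ n * K * ‖z'‖) :
    ∀ z' ∈ ball (0 : EuclideanSpace ℝ (Fin (n - 1))) α, z' ≠ 0 →
      ‖z'‖ ^ 2 + (h z') ^ 2 ≤ (2 * ρ) ^ 2 →
      ρ ^ 2 < ‖z'‖ ^ 2 + (h z' - ρ) ^ 2 := by
  intro z' hz' hne hle
  by_contra hcon
  push_neg at hcon
  have hzpos : 0 < ‖z'‖ := norm_pos_iff.mpr hne
  have hb := hb1 z' hz'
  have habs : |h z'| ≤ n * K * ‖z'‖ ^ 2 := hb
  have h1 : ‖z'‖ ^ 2 ≤ 2 * ρ * (n * K * ‖z'‖ ^ 2) := by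
    nlinarith [abs_le.mp habs, sq_nonneg (h z')]
  have hs : 0 < ‖z'‖ ^ 2 := by positivity
  have h2 : (1:ℝ) ≤ 2 * ρ * (n * K) := by nlinarith
  have hρ1 : ρ < 1 / (8 * n * K) := lt_of_lt_of_le hρlt (min_le_left _ _)
  have hn2 : (2:ℝ) ≤ n := by exact_mod_cast hn
  have hnK : 0 < (n:ℝ) * K := by positivity
  have h3 : ρ * (8 * n * K) < 1 := (lt_div_iff₀ (by positivity)).mp hρ1
  nlinarith
end
end

section
/- Let Ω ⊆ ℝⁿ be a uniformly C² domain of type (α, β, K) with β < min{α, 2/(nK)}, and let R_* denote the reach of Γ = ∂Ω. Then there exists a constant C = C(α, β, K) > 0 such that R_* ≥ C > 0; more precisely, reach(Γ, z₀) ≥ min{1/(2nK), β/4} for every z₀ ∈ Γ. -/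
open Metric Set RealInnerProductSpace

/-! Write `x = z₀ - ℓ ν(z₀)`. A boundary point `z` with `|z - z₀| ≤ 2ℓ` lies in the chart at `z₀`,
so `z = z₀ + v - h(v) ν(z₀)` with `v ⊥ ν(z₀)`, and Taylor's theorem gives `|h v| ≤ K |v|²`. Hence
`|x - z|² = |v|² + (ℓ - h v)² ≥ ℓ² + (1 - 2Kℓ) |v|²`, which exceeds `ℓ² = |x - z₀|²` unless `v = 0`,
i.e. `z = z₀`. Boundary points farther than `2ℓ` from `z₀` are farther than `ℓ` from `x` by the
triangle inequality. -/

section Taylor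

variable {E : Type*} [NormedAddCommGroup E] [NormedSpace ℝ E] {h : E → ℝ} {r K : ℝ}

theorem norm_fderiv_le_of_norm_iteratedFDerivWithin_two_le (hc : ContDiffOn ℝ 2 h (ball 0 r))
    (hd0 : fderivWithin ℝ h (ball 0 r) 0 = 0)
    (hK : ∀ v ∈ ball 0 r, ‖iteratedFDerivWithin ℝ 2 h (ball 0 r) v‖ ≤ K)
    {w : E} (hw : w ∈ ball 0 r) : ‖fderiv ℝ h w‖ ≤ K * ‖w‖ := by
  have hsub : closedBall (0 : E) ‖w‖ ⊆ ball 0 r := closedBall_subset_ball (mem_ball_zero_iff.mp hw)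
  have hdiff : ∀ x ∈ closedBall (0 : E) ‖w‖, DifferentiableAt ℝ (fderiv ℝ h) x := fun x hx =>
    ((hc.contDiffAt (isOpen_ball.mem_nhds (hsub hx))).fderiv_right (m := 1) le_rfl).differentiableAt
      one_ne_zero
  have hbound : ∀ x ∈ closedBall (0 : E) ‖w‖, ‖fderiv ℝ (fderiv ℝ h) x‖ ≤ K := fun x hx => by
    have h2 : ‖fderiv ℝ (fderiv ℝ h) x‖ = ‖iteratedFDeriv ℝ 2 h x‖ := by
      rw [← norm_iteratedFDeriv_fderiv (n := 1), ← norm_iteratedFDeriv_fderiv (n := 0),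
        norm_iteratedFDeriv_zero]
    rw [h2, ← iteratedFDerivWithin_of_isOpen 2 isOpen_ball (hsub hx)]
    exact hK x (hsub hx)
  have hd0' : fderiv ℝ h 0 = 0 := by
    rw [← fderivWithin_of_isOpen isOpen_ball (hsub (mem_closedBall_self (norm_nonneg w))), hd0]
  simpa [hd0'] using (convex_closedBall (0 : E) ‖w‖).norm_image_sub_le_of_norm_fderiv_le hdiff
    hbound (mem_closedBall_self (norm_nonneg w)) (by simp)

theorem abs_le_mul_norm_sq_of_norm_iteratedFDerivWithin_two_le (hc : ContDiffOn ℝ 2 h (ball 0 r))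
    (h0 : h 0 = 0) (hd0 : fderivWithin ℝ h (ball 0 r) 0 = 0)
    (hK : ∀ v ∈ ball 0 r, ‖iteratedFDerivWithin ℝ 2 h (ball 0 r) v‖ ≤ K)
    {v : E} (hv : v ∈ ball 0 r) : |h v| ≤ K * ‖v‖ ^ 2 := by
  have hsub : closedBall (0 : E) ‖v‖ ⊆ ball 0 r := closedBall_subset_ball (mem_ball_zero_iff.mp hv)
  have hK0 : 0 ≤ K := (norm_nonneg _).trans (hK 0 (hsub (mem_closedBall_self (norm_nonneg v))))
  have hdiff : ∀ x ∈ closedBall (0 : E) ‖v‖, DifferentiableAt ℝ h x := fun x hx =>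
    (hc.contDiffAt (isOpen_ball.mem_nhds (hsub hx))).differentiableAt two_ne_zero
  have hbound : ∀ x ∈ closedBall (0 : E) ‖v‖, ‖fderiv ℝ h x‖ ≤ K * ‖v‖ := fun x hx =>
    (norm_fderiv_le_of_norm_iteratedFDerivWithin_two_le hc hd0 hK (hsub hx)).trans
      (mul_le_mul_of_nonneg_left (mem_closedBall_zero_iff.mp hx) hK0)
  have := (convex_closedBall (0 : E) ‖v‖).norm_image_sub_le_of_norm_fderiv_le hdiff hbound
    (mem_closedBall_self (norm_nonneg v)) (y := v) (by simp)
  rw [h0, sub_zero, sub_zero, Real.norm_eq_abs] at this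
  linarith

end Taylor

section Orthogonal

variable {F : Type*} [NormedAddCommGroup F] [InnerProductSpace ℝ F] {u : F}

theorem exists_eq_sub_smul_of_norm_eq_one (hu : ‖u‖ = 1) (w : F) :
    ∃ (v : (ℝ ∙ u)ᗮ) (t : ℝ), w = v - t • u ∧ ‖v‖ ≤ ‖w‖ ∧ |t| ≤ ‖w‖ := by
  refine ⟨(ℝ ∙ u)ᗮ.orthogonalProjectionOnto w, -⟪u, w⟫, ?_, ?_, ?_⟩
  · rw [neg_smul, sub_neg_eq_add, ← Submodule.starProjection_unit_singleton ℝ hu,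
      Submodule.coe_orthogonalProjectionOnto_apply, add_comm,
      Submodule.starProjection_add_starProjection_orthogonal]
  · exact Submodule.norm_starProjection_apply_le _ w
  · simpa [hu] using abs_real_inner_le_norm u w

theorem dist_sub_smul_add_sub_smul_sq (hu : ‖u‖ = 1) (z₀ : F) (ℓ t : ℝ) (v : (ℝ ∙ u)ᗮ) :
    dist (z₀ - ℓ • u) (z₀ + v - t • u) ^ 2 = ‖v‖ ^ 2 + (t - ℓ) ^ 2 := by
  have horth : ⟪(t - ℓ) • u, (v : F)⟫ = 0 := by
    rw [real_inner_smul_left, Submodule.mem_orthogonal_singleton_iff_inner_right.mp v.2, mul_zero]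
  rw [dist_eq_norm, show z₀ - ℓ • u - (z₀ + v - t • u) = (t - ℓ) • u - v by module,
    sq, norm_sub_sq_eq_norm_sq_add_norm_sq_real horth, norm_smul, hu, mul_one, Real.norm_eq_abs,
    abs_mul_abs_self, Submodule.coe_norm]
  ring

theorem lt_dist_sub_smul_of_abs_le (hu : ‖u‖ = 1) (z₀ : F) {ℓ K : ℝ} (hℓ : 0 < ℓ)
    (hKℓ : 2 * K * ℓ < 1) {v : (ℝ ∙ u)ᗮ} (hv : v ≠ 0) {t : ℝ} (ht : |t| ≤ K * ‖v‖ ^ 2) :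
    ℓ < dist (z₀ - ℓ • u) (z₀ + v - t • u) := by
  have hv : 0 < ‖v‖ ^ 2 := by positivity
  have hsq : ℓ ^ 2 < dist (z₀ - ℓ • u) (z₀ + v - t • u) ^ 2 := by
    rw [dist_sub_smul_add_sub_smul_sq hu]
    nlinarith [le_abs_self t, sq_nonneg t]
  exact lt_of_pow_lt_pow_left₀ 2 dist_nonneg hsq

end Orthogonal

theorem existsUnique_dist_eq_infDist_of_forall_lt_dist {X : Type*} [PseudoMetricSpace X]
    {s : Set X} {x z₀ : X} (hz₀ : z₀ ∈ s)
    (hnear : ∀ z ∈ s, z ≠ z₀ → dist z z₀ ≤ 2 * dist x z₀ → dist x z₀ < dist x z) :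
    ∃! z, z ∈ s ∧ dist x z = infDist x s := by
  have hlt : ∀ z ∈ s, z ≠ z₀ → dist x z₀ < dist x z := fun z hz hne => by
    by_cases hfar : dist z z₀ ≤ 2 * dist x z₀
    · exact hnear z hz hne hfar
    · linarith [dist_triangle z x z₀, dist_comm x z]
  have hinf : infDist x s = dist x z₀ :=
    le_antisymm (infDist_le_dist_of_mem hz₀) ((le_infDist ⟨z₀, hz₀⟩).mpr fun z hz =>
      (eq_or_ne z z₀).elim (fun hz => hz ▸ le_rfl) fun hne => (hlt z hz hne).le)
  refine ⟨z₀, ⟨hz₀, hinf.symm⟩, fun z ⟨hz, hdz⟩ => ?_⟩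
  by_contra hne
  exact (hlt z hz hne).ne' (hdz.trans hinf)

theorem two_mul_mul_lt_one_of_lt_one_div {n : ℕ} {K ℓ : ℝ} (hℓ : 0 < ℓ)
    (h : ℓ < 1 / (2 * n * K)) : 2 * K * ℓ < 1 := by
  have hpos : 0 < 2 * n * K := one_div_pos.mp (hℓ.trans h)
  -- junk value: `1 / (2 * 0 * K) = 0`, so `0 < ℓ` already excludes `n = 0`
  have hn : n ≠ 0 := by rintro rfl; simp at hpos
  have hK : 0 < K := pos_of_mul_pos_right hpos (by positivity)
  have hn1 : (1 : ℝ) ≤ n := Nat.one_le_cast.mpr (Nat.one_le_iff_ne_zero.mpr hn)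
  rw [lt_div_iff₀ hpos] at h
  nlinarith

theorem stmt_6_general (n : ℕ) (α β K : ℝ)
    (hβα : β < α)
    (Ω : Set (EuclideanSpace ℝ (Fin n)))
    (ν : EuclideanSpace ℝ (Fin n) → EuclideanSpace ℝ (Fin n))
    -- uniformly `C²` domain of type (α, β, K): local graph representation at every
    -- boundary point `z₀`, with outward unit normal `ν z₀`
    (charts : ∀ z₀ ∈ closure Ω \ Ω,
      ‖ν z₀‖ = 1 ∧
      ∃ h : (Submodule.span ℝ {ν z₀})ᗮ → ℝ,
        ContDiffOn ℝ 2 h (ball 0 α) ∧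
        h 0 = 0 ∧
        fderivWithin ℝ h (ball 0 α) 0 = 0 ∧
        (∀ v ∈ ball (0 : (Submodule.span ℝ {ν z₀})ᗮ) α,
          |h v| ≤ K ∧ ‖iteratedFDerivWithin ℝ 1 h (ball 0 α) v‖ ≤ K ∧
            ‖iteratedFDerivWithin ℝ 2 h (ball 0 α) v‖ ≤ K) ∧
        (∀ (v : (Submodule.span ℝ {ν z₀})ᗮ) (t : ℝ), ‖v‖ < α → |t - h v| < β →
          (z₀ + (v : EuclideanSpace ℝ (Fin n)) - t • ν z₀ ∈ Ω ↔ h v < t) ∧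
          (z₀ + (v : EuclideanSpace ℝ (Fin n)) - t • ν z₀ ∈ closure Ω \ Ω ↔ t = h v))) :
    -- conclusion: reach(Γ, z₀) ≥ min {1/(2nK), β/4} for every z₀ ∈ Γ,
    -- i.e. every point z₀ - ℓ ν(z₀) with 0 < ℓ < min {1/(2nK), β/4} has a unique
    -- nearest point on Γ = closure Ω \ Ω
    ∀ z₀ ∈ closure Ω \ Ω, ∀ ℓ : ℝ, 0 < ℓ → ℓ < min (1 / (2 * n * K)) (β / 4) →
      ∃! z, z ∈ closure Ω \ Ω ∧
        dist (z₀ - ℓ • ν z₀) z = infDist (z₀ - ℓ • ν z₀) (closure Ω \ Ω) := by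
  intro z₀ hz₀ ℓ hℓ hℓm
  obtain ⟨hν, h, hc, h0, hd0, hbd, hgraph⟩ := charts z₀ hz₀
  have hℓβ : ℓ < β / 4 := hℓm.trans_le (min_le_right _ _)
  have hKℓ : 2 * K * ℓ < 1 := two_mul_mul_lt_one_of_lt_one_div hℓ (hℓm.trans_le (min_le_left _ _))
  have hK : 0 ≤ K := (abs_nonneg _).trans (hbd 0 (mem_ball_self (by linarith))).1
  have hdist : dist (z₀ - ℓ • ν z₀) z₀ = ℓ := by simp [norm_smul, hν, hℓ.le]
  refine existsUnique_dist_eq_infDist_of_forall_lt_dist hz₀ fun z hz hne hnear => ?_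
  rw [hdist] at hnear ⊢
  obtain ⟨v, t, hzv, hv, ht⟩ := exists_eq_sub_smul_of_norm_eq_one hν (z - z₀)
  rw [← dist_eq_norm] at hv ht
  obtain rfl : z = z₀ + v - t • ν z₀ := by rw [add_sub_assoc, ← hzv]; abel
  have hvα : ‖v‖ < α := by linarith
  have htaylor := abs_le_mul_norm_sq_of_norm_iteratedFDerivWithin_two_le hc h0 hd0
    (fun w hw => (hbd w hw).2.2) (mem_ball_zero_iff.mpr hvα)
  have hhv : |h v| < 2 * ℓ := by
    nlinarith [mul_le_mul_of_nonneg_left (pow_le_pow_left₀ (norm_nonneg v) (hv.trans hnear) 2) hK]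
  obtain rfl : t = h v := ((hgraph v t hvα (by linarith [abs_sub t (h v)])).2).mp hz
  have hv0 : v ≠ 0 := by rintro rfl; simp [h0] at hne
  exact lt_dist_sub_smul_of_abs_le hν z₀ hℓ hKℓ hv0 htaylor

theorem stmt_6 (n : ℕ) (hn : 2 ≤ n) (α β K : ℝ)
    (hα : 0 < α) (hβ : 0 < β) (hK : 0 < K)
    (hβα : β < α) (hβK : β < 2 / (n * K))
    (Ω : Set (EuclideanSpace ℝ (Fin n))) (hΩ : IsOpen Ω)
    (ν : EuclideanSpace ℝ (Fin n) → EuclideanSpace ℝ (Fin n))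
    -- uniformly `C²` domain of type (α, β, K): local graph representation at every
    -- boundary point `z₀`, with outward unit normal `ν z₀`
    (charts : ∀ z₀ ∈ closure Ω \ Ω,
      ‖ν z₀‖ = 1 ∧
      ∃ h : (Submodule.span ℝ {ν z₀})ᗮ → ℝ,
        ContDiffOn ℝ 2 h (ball 0 α) ∧
        h 0 = 0 ∧
        fderivWithin ℝ h (ball 0 α) 0 = 0 ∧
        (∀ v ∈ ball (0 : (Submodule.span ℝ {ν z₀})ᗮ) α,
          |h v| ≤ K ∧ ‖iteratedFDerivWithin ℝ 1 h (ball 0 α) v‖ ≤ K ∧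
            ‖iteratedFDerivWithin ℝ 2 h (ball 0 α) v‖ ≤ K) ∧
        (∀ (v : (Submodule.span ℝ {ν z₀})ᗮ) (t : ℝ), ‖v‖ < α → |t - h v| < β →
          (z₀ + (v : EuclideanSpace ℝ (Fin n)) - t • ν z₀ ∈ Ω ↔ h v < t) ∧
          (z₀ + (v : EuclideanSpace ℝ (Fin n)) - t • ν z₀ ∈ closure Ω \ Ω ↔ t = h v))) :
    -- conclusion: reach(Γ, z₀) ≥ min {1/(2nK), β/4} for every z₀ ∈ Γ,
    -- i.e. every point z₀ - ℓ ν(z₀) with 0 < ℓ < min {1/(2nK), β/4} has a unique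
    -- nearest point on Γ = closure Ω \ Ω
    ∀ z₀ ∈ closure Ω \ Ω, ∀ ℓ : ℝ, 0 < ℓ → ℓ < min (1 / (2 * n * K)) (β / 4) →
      ∃! z, z ∈ closure Ω \ Ω ∧
        dist (z₀ - ℓ • ν z₀) z = infDist (z₀ - ℓ • ν z₀) (closure Ω \ Ω) :=
  stmt_6_general n α β K hβα Ω ν charts
end

section
/- Let n ≥ 2, K > 0, and 0 < ρ < min{(32nK)^{−1}, α, β, R_*}. Let h : B_ρ(0') → ℝ satisfy h(0') = 0, |h(x')| ≤ nK|x'|² and |∇'h(x')| ≤ nKρ < 1/32 on B_ρ(0'). Let x ∈ B_{ρ/4}((0', ρ/2)). Then for every unit vector e_v ∈ S^{n−1}, the ray {x + ℓ e_v : ℓ > 0} intersects the graph {(z', h(z')) : |z'| < ρ} in at most one point. -/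
/-!
Write `x = (x', xₙ)` and `e_v = (v', vₙ)`. A point `x + ℓ e_v` of the graph lies in the thin slab
`|zₙ| < ρ/32` while `xₙ > ρ/4`, and it is within `2ρ` of `x`; hence `vₙ < -1/16`, i.e. the ray
is steep. On the other hand, if the ray met the graph twice, the mean value theorem along the
segment between the two points would give `|vₙ| ≤ ‖∇'h‖ ‖v'‖ ≤ nKρ < 1/32`.
-/

open Metric Set

section RayGraph

variable {E : Type*} [NormedAddCommGroup E] [NormedSpace ℝ E]

theorem abs_le_mul_norm_of_ray_meets_graph_twice {h : E → ℝ} {s : Set E} {C : ℝ}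
    (hs : Convex ℝ s) (hdiff : DifferentiableOn ℝ h s)
    (hgrad : ∀ z ∈ s, ‖fderivWithin ℝ h s z‖ ≤ C)
    {x' v' : E} {xn vn ℓ₁ ℓ₂ : ℝ} (hne : ℓ₁ ≠ ℓ₂)
    (hs₁ : x' + ℓ₁ • v' ∈ s) (hh₁ : xn + ℓ₁ * vn = h (x' + ℓ₁ • v'))
    (hs₂ : x' + ℓ₂ • v' ∈ s) (hh₂ : xn + ℓ₂ * vn = h (x' + ℓ₂ • v')) :
    |vn| ≤ C * ‖v'‖ := by
  have hmvt := hs.norm_image_sub_le_of_norm_fderivWithin_le hdiff hgrad hs₁ hs₂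
  have hrise : h (x' + ℓ₂ • v') - h (x' + ℓ₁ • v') = (ℓ₂ - ℓ₁) * vn := by
    rw [← hh₁, ← hh₂]; ring
  have hrun : x' + ℓ₂ • v' - (x' + ℓ₁ • v') = (ℓ₂ - ℓ₁) • v' := by
    rw [sub_smul]; abel
  rw [hrise, hrun, norm_mul, norm_smul, Real.norm_eq_abs, mul_left_comm] at hmvt
  exact le_of_mul_le_mul_left hmvt (abs_pos.mpr (sub_ne_zero.mpr hne.symm))

variable {x' v' : E} {xn vn ℓ ρ : ℝ}

theorem lt_two_mul_of_ray_mem_cylinder (hx : ‖x'‖ ^ 2 + (xn - ρ / 2) ^ 2 < (ρ / 4) ^ 2)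
    (hv : ‖v'‖ ^ 2 + vn ^ 2 = 1) (hℓ : 0 < ℓ) (hz' : ‖x' + ℓ • v'‖ < ρ)
    (hzn : |xn + ℓ * vn| < ρ / 32) : ℓ < 2 * ρ := by
  have hρ : 0 < ρ := (norm_nonneg _).trans_lt hz'
  have hx' : ‖x'‖ < ρ / 4 := by nlinarith [norm_nonneg x']
  have hhoriz : ℓ * ‖v'‖ < 5 * ρ / 4 := by
    have := norm_sub_le (x' + ℓ • v') x'
    rw [add_sub_cancel_left, norm_smul, Real.norm_of_nonneg hℓ.le] at this
    linarith
  have hvert : |ℓ * vn| < ρ := by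
    rw [abs_lt] at hzn ⊢
    constructor <;> nlinarith
  have hpyth : (ℓ * ‖v'‖) ^ 2 + |ℓ * vn| ^ 2 = ℓ ^ 2 := by
    rw [sq_abs]; linear_combination ℓ ^ 2 * hv
  nlinarith [mul_nonneg hℓ.le (norm_nonneg v'), abs_nonneg (ℓ * vn)]

theorem one_div_sixteen_lt_neg_of_ray_mem_cylinder
    (hx : ‖x'‖ ^ 2 + (xn - ρ / 2) ^ 2 < (ρ / 4) ^ 2) (hv : ‖v'‖ ^ 2 + vn ^ 2 = 1) (hℓ : 0 < ℓ)
    (hz' : ‖x' + ℓ • v'‖ < ρ) (hzn : |xn + ℓ * vn| < ρ / 32) : 1 / 16 < -vn := by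
  have hℓρ := lt_two_mul_of_ray_mem_cylinder hx hv hℓ hz' hzn
  have hxn : ρ / 4 < xn := by nlinarith [sq_nonneg ‖x'‖]
  have hdrop : ℓ * vn < -(7 * ρ / 32) := by linarith [(abs_lt.mp hzn).2]
  nlinarith

end RayGraph

theorem stmt_8_general (n : ℕ) (K ρ : ℝ)
    (hρ : 0 < ρ) (hρ1 : ρ < (32 * n * K)⁻¹)
    (h : EuclideanSpace ℝ (Fin (n - 1)) → ℝ)
    (hhb : ∀ x' ∈ ball (0 : EuclideanSpace ℝ (Fin (n - 1))) ρ, |h x'| ≤ n * K * ‖x'‖ ^ 2)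
    (hdiff : DifferentiableOn ℝ h (ball 0 ρ))
    (hgrad : ∀ x' ∈ ball (0 : EuclideanSpace ℝ (Fin (n - 1))) ρ,
      ‖fderivWithin ℝ h (ball 0 ρ) x'‖ ≤ n * K * ρ)
    -- the point `x = (x', xₙ)` lies in the Euclidean ball `B_{ρ/4}((0', ρ/2))`
    (x' : EuclideanSpace ℝ (Fin (n - 1))) (xn : ℝ)
    (hx : ‖x'‖ ^ 2 + (xn - ρ / 2) ^ 2 < (ρ / 4) ^ 2)
    -- `e_v = (v', vₙ)` is a unit vector
    (v' : EuclideanSpace ℝ (Fin (n - 1))) (vn : ℝ) (hv : ‖v'‖ ^ 2 + vn ^ 2 = 1) :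
    -- the ray `x + ℓ e_v`, `ℓ > 0`, meets the graph `{(z', h z') : ‖z'‖ < ρ}` at
    -- most once
    ∀ ℓ₁ ℓ₂ : ℝ, 0 < ℓ₁ → 0 < ℓ₂ →
      ‖x' + ℓ₁ • v'‖ < ρ → xn + ℓ₁ * vn = h (x' + ℓ₁ • v') →
      ‖x' + ℓ₂ • v'‖ < ρ → xn + ℓ₂ * vn = h (x' + ℓ₂ • v') →
      ℓ₁ = ℓ₂ := by
  intro ℓ₁ ℓ₂ hℓ₁ _ hz₁ hh₁ hz₂ hh₂
  by_contra hne
  have hpos : 0 < 32 * n * K := inv_pos.mp (hρ.trans hρ1)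
  have hslope : n * K * ρ < 1 / 32 := by
    have := (lt_inv_mul_iff₀' hpos).mp (by rwa [mul_one]); linarith
  have hmem₁ : x' + ℓ₁ • v' ∈ ball 0 ρ := mem_ball_zero_iff.mpr hz₁
  have hmem₂ : x' + ℓ₂ • v' ∈ ball 0 ρ := mem_ball_zero_iff.mpr hz₂
  have hslab : |xn + ℓ₁ * vn| < ρ / 32 := by
    rw [hh₁]
    calc |h (x' + ℓ₁ • v')| ≤ n * K * ‖x' + ℓ₁ • v'‖ ^ 2 := hhb _ hmem₁
      _ ≤ n * K * ρ * ρ := by rw [mul_assoc _ ρ, ← sq]; gcongr; linarith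
      _ < ρ / 32 := by nlinarith
  have hsteep := one_div_sixteen_lt_neg_of_ray_mem_cylinder hx hv hℓ₁ hz₁ hslab
  have hflat := abs_le_mul_norm_of_ray_meets_graph_twice (convex_ball 0 ρ) hdiff hgrad hne
    hmem₁ hh₁ hmem₂ hh₂
  have hv' : ‖v'‖ ≤ 1 := by nlinarith [norm_nonneg v']
  have hC : 0 ≤ n * K * ρ := mul_nonneg (by linarith) hρ.le
  linarith [neg_abs_le vn, mul_le_of_le_one_right hC hv']

theorem stmt_8 (n : ℕ) (hn : 2 ≤ n) (K α β Rst ρ : ℝ)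
    (hK : 0 < K) (hα : 0 < α) (hβ : 0 < β) (hRst : 0 < Rst)
    (hρ : 0 < ρ) (hρ1 : ρ < (32 * n * K)⁻¹) (hρ2 : ρ < α) (hρ3 : ρ < β) (hρ4 : ρ < Rst)
    (h : EuclideanSpace ℝ (Fin (n - 1)) → ℝ)
    (h0 : h 0 = 0)
    (hhb : ∀ x' ∈ ball (0 : EuclideanSpace ℝ (Fin (n - 1))) ρ, |h x'| ≤ n * K * ‖x'‖ ^ 2)
    (hdiff : DifferentiableOn ℝ h (ball 0 ρ))
    (hgrad : ∀ x' ∈ ball (0 : EuclideanSpace ℝ (Fin (n - 1))) ρ,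
      ‖fderivWithin ℝ h (ball 0 ρ) x'‖ ≤ n * K * ρ)
    -- the point `x = (x', xₙ)` lies in the Euclidean ball `B_{ρ/4}((0', ρ/2))`
    (x' : EuclideanSpace ℝ (Fin (n - 1))) (xn : ℝ)
    (hx : ‖x'‖ ^ 2 + (xn - ρ / 2) ^ 2 < (ρ / 4) ^ 2)
    -- `e_v = (v', vₙ)` is a unit vector
    (v' : EuclideanSpace ℝ (Fin (n - 1))) (vn : ℝ) (hv : ‖v'‖ ^ 2 + vn ^ 2 = 1) :
    -- the ray `x + ℓ e_v`, `ℓ > 0`, meets the graph `{(z', h z') : ‖z'‖ < ρ}` at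
    -- most once
    ∀ ℓ₁ ℓ₂ : ℝ, 0 < ℓ₁ → 0 < ℓ₂ →
      ‖x' + ℓ₁ • v'‖ < ρ → xn + ℓ₁ * vn = h (x' + ℓ₁ • v') →
      ‖x' + ℓ₂ • v'‖ < ρ → xn + ℓ₂ * vn = h (x' + ℓ₂ • v') →
      ℓ₁ = ℓ₂ :=
  stmt_8_general n K ρ hρ hρ1 h hhb hdiff hgrad x' xn hx v' vn hv
end
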